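/- Let m, n ≥ 2 be integers and let p_c ∈ (0,1) be the unique fixed point of f_{m,n}(p) = 1 − (1 − p^n)^m in (0,1). Then for every p ∈ (p_c, 1], the sequence of iterates f_{m,n}^{∘k}(p) converges to 1 as k → ∞. -/

import Mathlib

/-! Above the critical point the map satisfies `p < f p`: near `1` this holds because
`1 - f (1 - δ) = (1 - (1 - δ) ^ n) ^ m ≤ (n δ) ^ m = o(δ)` for `m ≥ 2`, and by the intermediate
value theorem `f - id` cannot change sign on `(p_c, 1)`, where it has no zero. Hence the iterates
increase, stay in `[p, 1]`, and converge to a fixed point in `(p_c, 1]`, which can only be `1`. -/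

open Set Filter Topology

theorem tendsto_iterate_of_le_apply {f : ℝ → ℝ} {a b : ℝ} (hf : Continuous f)
    (hmaps : MapsTo f (Icc a b) (Icc a b)) (hle : ∀ x ∈ Icc a b, x ≤ f x)
    (hfix : ∀ x ∈ Icc a b, f x = x → x = b) {p : ℝ} (hp : p ∈ Icc a b) :
    Tendsto (fun k => f^[k] p) atTop (𝓝 b) := by
  have hmem : ∀ k, f^[k] p ∈ Icc a b := fun k => hmaps.iterate k hp
  have hmono : Monotone fun k => f^[k] p := monotone_nat_of_le_succ fun k => by
    simpa only [Function.iterate_succ_apply'] using hle _ (hmem k)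
  have hbdd : BddAbove (range fun k => f^[k] p) := ⟨b, by rintro _ ⟨k, rfl⟩; exact (hmem k).2⟩
  have hlim := tendsto_atTop_ciSup hmono hbdd
  have hL : (⨆ k, f^[k] p) ∈ Icc a b := isClosed_Icc.mem_of_tendsto hlim (Eventually.of_forall hmem)
  rwa [← hfix _ hL (isFixedPt_of_tendsto_iterate hlim hf.continuousAt)]

theorem lt_apply_of_forall_apply_ne {f : ℝ → ℝ} {s : Set ℝ} (hs : IsPreconnected s)
    (hf : ContinuousOn f s) (hfix : ∀ x ∈ s, f x ≠ x) {r : ℝ} (hr : r ∈ s) (hrf : r < f r)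
    {x : ℝ} (hx : x ∈ s) : x < f x := by
  by_contra! hxf
  obtain ⟨y, hy, hfy⟩ := hs.intermediate_value₂ hr hx continuousOn_id hf hrf.le hxf
  exact hfix y hy hfy.symm

def diamondMap (m n : ℕ) (p : ℝ) : ℝ := 1 - (1 - p ^ n) ^ m

namespace diamondMap

variable {m n : ℕ}

theorem continuous : Continuous (diamondMap m n) := by
  unfold diamondMap; fun_prop

theorem apply_one (hm : m ≠ 0) : diamondMap m n 1 = 1 := by
  simp [diamondMap, hm]

theorem apply_le_one {p : ℝ} (hp0 : 0 ≤ p) (hp1 : p ≤ 1) : diamondMap m n p ≤ 1 := by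
  have : 0 ≤ 1 - p ^ n := sub_nonneg.2 (pow_le_one₀ hp0 hp1)
  unfold diamondMap
  linarith [pow_nonneg this m]

theorem one_sub_lt_apply_one_sub (hm : 2 ≤ m) {δ : ℝ} (hδ0 : 0 < δ) (hδ1 : δ ≤ 1)
    (hδ : (n : ℝ) ^ m * δ < 1) : 1 - δ < diamondMap m n (1 - δ) := by
  have hbernoulli : 1 - (1 - δ) ^ n ≤ n * δ := by
    have := one_add_mul_le_pow (show (-2 : ℝ) ≤ -δ by linarith) n
    rw [← sub_eq_add_neg] at this
    linarith
  have hnonneg : 0 ≤ 1 - (1 - δ) ^ n := sub_nonneg.2 (pow_le_one₀ (by linarith) (by linarith))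
  have hsmall : (1 - (1 - δ) ^ n) ^ m < δ :=
    calc (1 - (1 - δ) ^ n) ^ m ≤ (n * δ) ^ m := pow_le_pow_left₀ hnonneg hbernoulli m
      _ = (n : ℝ) ^ m * δ ^ m := mul_pow _ _ _
      _ ≤ (n : ℝ) ^ m * δ ^ 2 :=
          mul_le_mul_of_nonneg_left (pow_le_pow_of_le_one hδ0.le hδ1 hm) (by positivity)
      _ = ((n : ℝ) ^ m * δ) * δ := by ring
      _ < δ := mul_lt_of_lt_one_left hδ0 hδ
  unfold diamondMap
  linarith

theorem exists_mem_Ioo_lt_apply (hm : 2 ≤ m) {q : ℝ} (hq : q < 1) :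
    ∃ r ∈ Ioo q 1, r < diamondMap m n r := by
  set δ := min ((1 - q) / 2) (1 / ((n : ℝ) ^ m + 1))
  have hN : (0 : ℝ) ≤ (n : ℝ) ^ m := by positivity
  have hδq : δ ≤ (1 - q) / 2 := min_le_left _ _
  have hδN : δ ≤ 1 / ((n : ℝ) ^ m + 1) := min_le_right _ _
  have hδ0 : 0 < δ := lt_min (by linarith) (by positivity)
  have hδ1 : δ ≤ 1 := hδN.trans (div_le_one_of_le₀ (by linarith) (by positivity))
  have hδ : (n : ℝ) ^ m * δ < 1 := by
    rw [le_div_iff₀ (by positivity)] at hδN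
    nlinarith
  exact ⟨1 - δ, ⟨by linarith, by linarith⟩, one_sub_lt_apply_one_sub hm hδ0 hδ1 hδ⟩

theorem lt_apply_of_mem_Ioo (hm : 2 ≤ m) {p_c : ℝ} (hpc0 : 0 < p_c)
    (huniq : ∀ q ∈ Ioo (0 : ℝ) 1, diamondMap m n q = q → q = p_c) {x : ℝ}
    (hx : x ∈ Ioo p_c 1) : x < diamondMap m n x := by
  have hfix : ∀ y ∈ Ioo p_c 1, diamondMap m n y ≠ y := fun y hy hfy =>
    hy.1.ne' (huniq y ⟨hpc0.trans hy.1, hy.2⟩ hfy)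
  obtain ⟨r, hr, hrf⟩ := exists_mem_Ioo_lt_apply (n := n) hm (hx.1.trans hx.2)
  exact lt_apply_of_forall_apply_ne isPreconnected_Ioo continuous.continuousOn hfix hr hrf hx

end diamondMap

theorem diamond_iterates_tendsto_one_general (m n : ℕ) (hm : 2 ≤ m)
    (p_c : ℝ) (hpc : p_c ∈ Set.Ioo (0 : ℝ) 1)
    (huniq : ∀ q ∈ Set.Ioo (0 : ℝ) 1, 1 - (1 - q ^ n) ^ m = q → q = p_c) :
    ∀ p ∈ Set.Ioc p_c (1 : ℝ),
      Filter.Tendsto (fun k : ℕ => (fun q : ℝ => 1 - (1 - q ^ n) ^ m)^[k] p)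
        Filter.atTop (nhds 1) := by
  intro p hp
  have hone : diamondMap m n 1 = 1 := diamondMap.apply_one (by omega)
  have hle : ∀ x ∈ Icc p 1, x ≤ diamondMap m n x := fun x hx =>
    hx.2.lt_or_eq.elim
      (fun hx1 => (diamondMap.lt_apply_of_mem_Ioo hm hpc.1 huniq ⟨hp.1.trans_le hx.1, hx1⟩).le)
      (fun hx1 => by rw [hx1, hone])
  have hmaps : MapsTo (diamondMap m n) (Icc p 1) (Icc p 1) := fun x hx =>
    ⟨hx.1.trans (hle x hx), diamondMap.apply_le_one (hpc.1.trans (hp.1.trans_le hx.1)).le hx.2⟩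
  have hfix : ∀ x ∈ Icc p 1, diamondMap m n x = x → x = 1 := fun x hx hfx =>
    hx.2.eq_or_lt.resolve_right fun hx1 =>
      (hp.1.trans_le hx.1).ne' (huniq x ⟨hpc.1.trans (hp.1.trans_le hx.1), hx1⟩ hfx)
  exact tendsto_iterate_of_le_apply diamondMap.continuous hmaps hle hfix ⟨le_rfl, hp.2⟩

/-- Let `m, n ≥ 2` be integers and `p_c ∈ (0,1)` the unique fixed point of
`f_{m,n}(p) = 1 − (1 − p^n)^m` in `(0,1)`. Then for every `p ∈ (p_c, 1]` the iterates
`f_{m,n}^{∘k}(p)` converge to `1` as `k → ∞`. -/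
theorem diamond_iterates_tendsto_one (m n : ℕ) (hm : 2 ≤ m) (hn : 2 ≤ n)
    (p_c : ℝ) (hpc : p_c ∈ Set.Ioo (0 : ℝ) 1) (hfix : 1 - (1 - p_c ^ n) ^ m = p_c)
    (huniq : ∀ q ∈ Set.Ioo (0 : ℝ) 1, 1 - (1 - q ^ n) ^ m = q → q = p_c) :
    ∀ p ∈ Set.Ioc p_c (1 : ℝ),
      Filter.Tendsto (fun k : ℕ => (fun q : ℝ => 1 - (1 - q ^ n) ^ m)^[k] p)
        Filter.atTop (nhds 1) :=
  diamond_iterates_tendsto_one_general m n hm p_c hpc huniq
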